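/- The 2-parameter Clifford-Jacobi polynomials defined by Z_{0,m}^{α,β} = 1 and the recurrence Z_{ℓ+1,m}^{α,β}(x) = [2(α-ℓ)x(1-x²) - 2(β-ℓ)x(1+x²)] Z_{ℓ,m}^{α,β}(x) - (1-x²)(1+x²) ∂Z_{ℓ,m}^{α,β}(x) satisfy the Rodrigues-type formula Z_{ℓ,m}^{α,β}(x) = (-1)^ℓ (1-|x|²)^{ℓ-α}(1+|x|²)^{ℓ-β} ∂^ℓ((1-|x|²)^α (1+|x|²)^β). -/

import Mathlib

open CliffordAlgebra MeasureTheory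

noncomputable section

/-- The negative-definite quadratic form `x ↦ -Σ_j x_j²` on `ℝ^m`. -/
def Qneg (m : ℕ) : QuadraticForm ℝ (Fin m → ℝ) :=
  -(QuadraticMap.weightedSumSquares ℝ (fun _ : Fin m => (1:ℝ)))

/-- The real Clifford algebra `Cl(m)` with `e_j² = -1` and anticommuting generators. -/
abbrev Cl (m : ℕ) := CliffordAlgebra (Qneg m)

/-- The generators `e_j = ι(e_j)`. -/
def e (m : ℕ) (j : Fin m) : Cl m := ι (Qneg m) (Pi.single j 1)

/-- A fixed basis of the Clifford algebra, used to differentiate (and integrate)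
Clifford-algebra-valued functions componentwise. -/
def clBasis (m : ℕ) : Module.Basis (Module.Basis.ofVectorSpaceIndex ℝ (Cl m)) ℝ (Cl m) :=
  Module.Basis.ofVectorSpace ℝ (Cl m)

/-- The partial derivative `∂_{x_j}` of a Clifford-algebra-valued function,
computed componentwise with respect to a fixed basis. -/
def pderiv (m : ℕ) (j : Fin m) (g : (Fin m → ℝ) → Cl m) (x : Fin m → ℝ) : Cl m :=
  ∑ᶠ i, (fderiv ℝ (fun y => (clBasis m).repr (g y) i) x (Pi.single j 1)) • clBasis m i

/-- The Dirac operator `∂ = Σ_j e_j ∂_{x_j}` (left Clifford multiplication). -/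
def dirac (m : ℕ) (g : (Fin m → ℝ) → Cl m) : (Fin m → ℝ) → Cl m :=
  fun x => ∑ j, e m j * pderiv m j g x

/-- The 2-parameter Clifford-Jacobi polynomials, defined by `Z_0 = 1` and the
recurrence `Z_{ℓ+1}(x) = [2(α-ℓ)x(1-x²) - 2(β-ℓ)x(1+x²)] Z_ℓ(x)
- (1-x²)(1+x²) ∂Z_ℓ(x)`. -/
def Z (m : ℕ) (α β : ℝ) : ℕ → (Fin m → ℝ) → Cl m
  | 0 => fun _ => 1
  | (ℓ + 1) => fun x =>
      ((2 * (α - (ℓ : ℝ))) • (ι (Qneg m) x * (1 - (ι (Qneg m) x) ^ 2))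
        - (2 * (β - (ℓ : ℝ))) • (ι (Qneg m) x * (1 + (ι (Qneg m) x) ^ 2))) * Z m α β ℓ x
      - (1 - (ι (Qneg m) x) ^ 2) * (1 + (ι (Qneg m) x) ^ 2) * dirac m (Z m α β ℓ) x

/-! Write `ω = (1-|x|²)^α (1+|x|²)^β` and `c_ℓ(t) = (-1)^ℓ (1-t)^{ℓ-α} (1+t)^{ℓ-β}`, and argue by
induction that `Z_ℓ = c_ℓ(|x|²) ∂^ℓ ω` on the unit ball. In `Cl(m)` one has `x² = -|x|²`, so the
recurrence reads `Z_{ℓ+1} = [2(α-ℓ)(1+|x|²) - 2(β-ℓ)(1-|x|²)] x Z_ℓ - (1+|x|²)(1-|x|²) ∂Z_ℓ`.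
The Leibniz rule `∂(φ(|x|²) G) = 2φ'(|x|²) x G + φ(|x|²) ∂G` splits `∂Z_ℓ` into an `x ∂^ℓ ω` term,
which cancels the first term of the recurrence because
`(1-t)(1+t) c_ℓ'(t) = ((ℓ-β)(1-t) - (ℓ-α)(1+t)) c_ℓ(t)`, and the term
`-(1-t)(1+t) c_ℓ(t) ∂^{ℓ+1} ω = c_{ℓ+1}(t) ∂^{ℓ+1} ω`. The Leibniz rule needs every `∂^ℓ ω` to be
differentiable on the ball; this holds because `Cl(m)` is finite-dimensional, so `∂` preserves
smoothness of the coordinates. -/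

open scoped ContDiff Topology

def jacobiWeight (a b t : ℝ) : ℝ := (1 - t) ^ a * (1 + t) ^ b

section jacobiWeight

variable {a b t : ℝ}

theorem jacobiWeight_neg_mul_self (ht : t ∈ Set.Ioo (-1) 1) :
    jacobiWeight (-a) (-b) t * jacobiWeight a b t = 1 := by
  obtain ⟨h₁, h₂⟩ : 0 < 1 - t ∧ 0 < 1 + t := ⟨by linarith [ht.2], by linarith [ht.1]⟩
  simp only [jacobiWeight, Real.rpow_neg h₁.le, Real.rpow_neg h₂.le]
  field_simp

theorem jacobiWeight_eq_mul_sub_one (ht : t ∈ Set.Ioo (-1) 1) :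
    jacobiWeight a b t = (1 - t) * (1 + t) * jacobiWeight (a - 1) (b - 1) t := by
  obtain ⟨h₁, h₂⟩ : 0 < 1 - t ∧ 0 < 1 + t := ⟨by linarith [ht.2], by linarith [ht.1]⟩
  simp only [jacobiWeight, Real.rpow_sub_one h₁.ne', Real.rpow_sub_one h₂.ne']
  field_simp

theorem hasDerivAt_jacobiWeight (ht : t ∈ Set.Ioo (-1) 1) :
    HasDerivAt (jacobiWeight a b)
      ((b * (1 - t) - a * (1 + t)) * jacobiWeight (a - 1) (b - 1) t) t := by
  obtain ⟨h₁, h₂⟩ : 0 < 1 - t ∧ 0 < 1 + t := ⟨by linarith [ht.2], by linarith [ht.1]⟩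
  have hd₁ := ((hasDerivAt_id t).const_sub 1).rpow_const (p := a) (Or.inl h₁.ne')
  have hd₂ := ((hasDerivAt_id t).const_add 1).rpow_const (p := b) (Or.inl h₂.ne')
  refine (hd₁.mul hd₂).congr_deriv ?_
  simp only [jacobiWeight, id, Real.rpow_sub_one h₁.ne', Real.rpow_sub_one h₂.ne']
  field_simp
  ring

theorem contDiffOn_jacobiWeight : ContDiffOn ℝ ∞ (jacobiWeight a b) (Set.Ioo (-1) 1) := by
  intro t ht
  obtain ⟨h₁, h₂⟩ : 0 < 1 - t ∧ 0 < 1 + t := ⟨by linarith [ht.2], by linarith [ht.1]⟩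
  exact (((Real.contDiffAt_rpow_const_of_ne h₁.ne').comp t (contDiffAt_const.sub contDiffAt_id)).mul
    ((Real.contDiffAt_rpow_const_of_ne h₂.ne').comp t (contDiffAt_const.add contDiffAt_id)))
    |>.contDiffWithinAt

end jacobiWeight

section sqNorm

variable {m : ℕ}

def sqNorm (y : Fin m → ℝ) : ℝ := ∑ j, y j ^ 2

theorem sqNorm_nonneg (y : Fin m → ℝ) : 0 ≤ sqNorm y :=
  Finset.sum_nonneg fun _ _ => sq_nonneg _

theorem contDiff_sqNorm : ContDiff ℝ ∞ (sqNorm (m := m)) :=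
  ContDiff.sum fun j _ => (contDiff_apply ℝ ℝ j).pow 2

theorem hasFDerivAt_sqNorm (x : Fin m → ℝ) :
    HasFDerivAt sqNorm
      (∑ j, (2 * x j) • ContinuousLinearMap.proj (R := ℝ) (φ := fun _ => ℝ) j) x := by
  refine (HasFDerivAt.fun_sum fun j _ => (hasFDerivAt_apply j x).pow 2).congr_fderiv ?_
  simp

theorem isOpen_setOf_sqNorm_lt_one : IsOpen {y : Fin m → ℝ | sqNorm y < 1} :=
  isOpen_lt contDiff_sqNorm.continuous continuous_const

theorem sqNorm_mem_Ioo {y : Fin m → ℝ} (hy : sqNorm y < 1) : sqNorm y ∈ Set.Ioo (-1) 1 :=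
  ⟨by linarith [sqNorm_nonneg y], hy⟩

end sqNorm

section CliffordCalculus

variable {m : ℕ}

instance : FiniteDimensional ℝ (Cl m) :=
  have : FiniteDimensional ℝ (ExteriorAlgebra ℝ (Fin m → ℝ)) :=
    .of_basis (Pi.basisFun ℝ (Fin m)).ExteriorAlgebra
  (CliffordAlgebra.equivExterior (Qneg m)).symm.finiteDimensional

/-- `Cl m` carries no norm; calculus on `Cl m`-valued functions is done through these
coordinates. -/
abbrev clCoords (m : ℕ) : Cl m ≃ₗ[ℝ] (Module.Basis.ofVectorSpaceIndex ℝ (Cl m) → ℝ) :=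
  (clBasis m).equivFun

theorem ι_eq_sum_smul_e (v : Fin m → ℝ) : ι (Qneg m) v = ∑ j, v j • e m j := by
  conv_lhs => rw [← Finset.univ_sum_single v]
  rw [map_sum]
  refine Finset.sum_congr rfl fun j _ => ?_
  rw [e, ← map_smul, ← Pi.single_smul', smul_eq_mul, mul_one]

theorem pderiv_eq_of_differentiableAt {g : (Fin m → ℝ) → Cl m} {x : Fin m → ℝ}
    (hg : DifferentiableAt ℝ (fun y => clCoords m (g y)) x) (j : Fin m) :
    pderiv m j g x =
      (clCoords m).symm (fderiv ℝ (fun y => clCoords m (g y)) x (Pi.single j 1)) := by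
  have := Fintype.ofFinite (Module.Basis.ofVectorSpaceIndex ℝ (Cl m))
  rw [pderiv, finsum_eq_sum_of_fintype, Module.Basis.equivFun_symm_apply,
    fderiv_pi fun i => differentiableAt_pi.mp hg i]
  rfl

theorem dirac_eq_of_differentiableAt {g : (Fin m → ℝ) → Cl m} {x : Fin m → ℝ}
    (hg : DifferentiableAt ℝ (fun y => clCoords m (g y)) x) :
    dirac m g x = ∑ j, e m j *
      (clCoords m).symm (fderiv ℝ (fun y => clCoords m (g y)) x (Pi.single j 1)) := by
  simp only [dirac, pderiv_eq_of_differentiableAt hg]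

theorem Filter.EventuallyEq.dirac_eq {g₁ g₂ : (Fin m → ℝ) → Cl m} {x : Fin m → ℝ}
    (h : g₁ =ᶠ[𝓝 x] g₂) : dirac m g₁ x = dirac m g₂ x := by
  simp only [dirac, pderiv]
  congr! 6 with j _ i
  exact Filter.EventuallyEq.fderiv_eq (h.fun_comp fun v => (clBasis m).repr v i)

theorem ContDiffOn.dirac {U : Set (Fin m → ℝ)} (hU : IsOpen U) {g : (Fin m → ℝ) → Cl m}
    (hg : ContDiffOn ℝ ∞ (fun y => clCoords m (g y)) U) :
    ContDiffOn ℝ ∞ (fun y => clCoords m (dirac m g y)) U := by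
  let L : Fin m → _ →L[ℝ] _ := fun j => LinearMap.toContinuousLinearMap
    ((clCoords m).toLinearMap ∘ₗ LinearMap.mulLeft ℝ (e m j) ∘ₗ (clCoords m).symm.toLinearMap)
  have hderiv : ContDiffOn ℝ ∞ (fderiv ℝ fun y => clCoords m (g y)) U :=
    hg.fderiv_of_isOpen hU (by simp)
  have hsum : ContDiffOn ℝ ∞
      (fun y => ∑ j, L j (fderiv ℝ (fun z => clCoords m (g z)) y (Pi.single j 1))) U :=
    .sum fun j _ => (L j).contDiff.comp_contDiffOn (hderiv.clm_apply contDiffOn_const)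
  refine hsum.congr fun y hy => ?_
  have hgy := (hg.contDiffAt (hU.mem_nhds hy)).differentiableAt (by simp)
  rw [dirac_eq_of_differentiableAt hgy, map_sum]
  rfl

theorem dirac_smul_apply {c : (Fin m → ℝ) → ℝ} {g : (Fin m → ℝ) → Cl m} {x : Fin m → ℝ}
    (hc : DifferentiableAt ℝ c x) (hg : DifferentiableAt ℝ (fun y => clCoords m (g y)) x) :
    dirac m (fun y => c y • g y) x =
      ι (Qneg m) (fun j => fderiv ℝ c x (Pi.single j 1)) * g x + c x • dirac m g x := by
  have hcg : (fun y => clCoords m (c y • g y)) = fun y => c y • clCoords m (g y) := by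
    simp only [map_smul]
  rw [dirac_eq_of_differentiableAt hg, dirac_eq_of_differentiableAt (hcg ▸ hc.smul hg), hcg,
    fderiv_fun_smul hc hg, ι_eq_sum_smul_e, Finset.sum_mul, Finset.smul_sum,
    ← Finset.sum_add_distrib]
  refine Finset.sum_congr rfl fun j _ => ?_
  simp only [add_apply, FunLike.coe_smul, Pi.smul_apply,
    ContinuousLinearMap.smulRight_apply, map_add, map_smul, LinearEquiv.symm_apply_apply,
    mul_add, mul_smul_comm, smul_mul_assoc, add_comm]

theorem ι_sq_eq_algebraMap_neg_sqNorm (x : Fin m → ℝ) :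
    ι (Qneg m) x ^ 2 = algebraMap ℝ (Cl m) (-sqNorm x) := by
  rw [sq, ι_sq_scalar]
  congr 1
  simp [Qneg, sqNorm, QuadraticMap.weightedSumSquares_apply, sq]

theorem dirac_radial_smul_apply {φ : ℝ → ℝ} {φ' : ℝ} {g : (Fin m → ℝ) → Cl m} {x : Fin m → ℝ}
    (hφ : HasDerivAt φ φ' (sqNorm x)) (hg : DifferentiableAt ℝ (fun y => clCoords m (g y)) x) :
    dirac m (fun y => φ (sqNorm y) • g y) x =
      (2 * φ') • (ι (Qneg m) x * g x) + φ (sqNorm x) • dirac m g x := by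
  have hc : HasFDerivAt (fun y => φ (sqNorm y)) _ x := hφ.comp_hasFDerivAt x (hasFDerivAt_sqNorm x)
  have hgrad : (fun j => fderiv ℝ (fun y => φ (sqNorm y)) x (Pi.single j 1)) = (2 * φ') • x := by
    ext j
    simp only [hc.fderiv, smul_apply, sum_apply, ContinuousLinearMap.proj_apply, Pi.single_apply,
      smul_eq_mul, mul_ite, mul_one, mul_zero, Finset.sum_ite_eq', Finset.mem_univ, ↓reduceIte,
      Pi.smul_apply]
    ring
  rw [dirac_smul_apply hc.differentiableAt hg, hgrad, map_smul, smul_mul_assoc]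

theorem Z_succ_apply (α β : ℝ) (ℓ : ℕ) (x : Fin m → ℝ) :
    Z m α β (ℓ + 1) x =
      (2 * (α - ℓ) * (1 + sqNorm x) - 2 * (β - ℓ) * (1 - sqNorm x)) • (ι (Qneg m) x * Z m α β ℓ x)
        - ((1 + sqNorm x) * (1 - sqNorm x)) • dirac m (Z m α β ℓ) x := by
  have h₁ : 1 - ι (Qneg m) x ^ 2 = (1 + sqNorm x) • (1 : Cl m) := by
    rw [ι_sq_eq_algebraMap_neg_sqNorm, Algebra.algebraMap_eq_smul_one]
    module
  have h₂ : 1 + ι (Qneg m) x ^ 2 = (1 - sqNorm x) • (1 : Cl m) := by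
    rw [ι_sq_eq_algebraMap_neg_sqNorm, Algebra.algebraMap_eq_smul_one]
    module
  simp only [Z]
  rw [h₁, h₂]
  simp only [sub_mul, mul_smul_comm, smul_mul_assoc, mul_one, one_mul, smul_smul]
  module

theorem contDiffOn_iterate_dirac_jacobiWeight (α β : ℝ) (ℓ : ℕ) :
    ContDiffOn ℝ ∞ (fun y => clCoords m ((dirac m)^[ℓ]
      (fun y => algebraMap ℝ (Cl m) (jacobiWeight α β (sqNorm y))) y)) {y | sqNorm y < 1} := by
  induction ℓ with
  | zero =>
    simp only [Function.iterate_zero, id, Algebra.algebraMap_eq_smul_one, map_smul]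
    exact (contDiffOn_jacobiWeight.comp contDiff_sqNorm.contDiffOn
      fun y hy => sqNorm_mem_Ioo hy).smul contDiffOn_const
  | succ ℓ ih =>
    simpa only [Function.iterate_succ_apply'] using ih.dirac isOpen_setOf_sqNorm_lt_one

theorem Z_eq_smul_iterate_dirac (α β : ℝ) (ℓ : ℕ) {x : Fin m → ℝ} (hx : sqNorm x < 1) :
    Z m α β ℓ x = ((-1) ^ ℓ * jacobiWeight (ℓ - α) (ℓ - β) (sqNorm x)) •
      (dirac m)^[ℓ] (fun y => algebraMap ℝ (Cl m) (jacobiWeight α β (sqNorm y))) x := by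
  induction ℓ generalizing x with
  | zero =>
    simp only [Z, Function.iterate_zero, id, pow_zero, one_mul, CharP.cast_eq_zero, zero_sub,
      Algebra.algebraMap_eq_smul_one, smul_smul, jacobiWeight_neg_mul_self (sqNorm_mem_Ioo hx),
      one_smul]
  | succ ℓ ih =>
    rw [Function.iterate_succ_apply']
    set G := (dirac m)^[ℓ] (fun y => algebraMap ℝ (Cl m) (jacobiWeight α β (sqNorm y)))
    have hs := sqNorm_mem_Ioo hx
    have hZ : Z m α β ℓ =ᶠ[𝓝 x]
        fun y => ((-1) ^ ℓ * jacobiWeight (ℓ - α) (ℓ - β) (sqNorm y)) • G y :=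
      Filter.eventually_of_mem (isOpen_setOf_sqNorm_lt_one.mem_nhds hx) fun y hy => ih hy
    have hφ := (hasDerivAt_jacobiWeight (a := ℓ - α) (b := ℓ - β) hs).const_mul ((-1 : ℝ) ^ ℓ)
    have hG : DifferentiableAt ℝ (fun y => clCoords m (G y)) x :=
      ((contDiffOn_iterate_dirac_jacobiWeight α β ℓ).contDiffAt
        (isOpen_setOf_sqNorm_lt_one.mem_nhds hx)).differentiableAt (by simp)
    rw [Z_succ_apply, ih hx, hZ.dirac_eq, dirac_radial_smul_apply hφ hG, mul_smul_comm]
    have hw := jacobiWeight_eq_mul_sub_one (a := ℓ - α) (b := ℓ - β) hs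
    have hw' : jacobiWeight ((ℓ + 1 : ℕ) - α) ((ℓ + 1 : ℕ) - β) (sqNorm x) =
        (1 - sqNorm x) * (1 + sqNorm x) * jacobiWeight (ℓ - α) (ℓ - β) (sqNorm x) := by
      convert jacobiWeight_eq_mul_sub_one hs using 3 <;> push_cast <;> ring
    linear_combination (norm := module)
      ((2 * (α - ℓ) * (1 + sqNorm x) - 2 * (β - ℓ) * (1 - sqNorm x)) * (-1) ^ ℓ * hw) •
        (ι (Qneg m) x * G x) - ((-1) ^ (ℓ + 1) * hw') • dirac m G x

end CliffordCalculus

/-- the Rodrigues-type formula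
`Z_ℓ(x) = (-1)^ℓ (1-|x|²)^{ℓ-α} (1+|x|²)^{ℓ-β} ∂^ℓ((1-|x|²)^α (1+|x|²)^β)`
on `|x| < 1`. -/
theorem Z_rodrigues (m : ℕ) (α β : ℝ) (ℓ : ℕ) (x : Fin m → ℝ)
    (hx : ∑ j, x j ^ 2 < 1) :
    Z m α β ℓ x =
      ((-1 : ℝ) ^ ℓ * (1 - ∑ j, x j ^ 2) ^ ((ℓ : ℝ) - α)
          * (1 + ∑ j, x j ^ 2) ^ ((ℓ : ℝ) - β)) •
        (dirac m)^[ℓ] (fun y => algebraMap ℝ (Cl m)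
          ((1 - ∑ j, y j ^ 2) ^ α * (1 + ∑ j, y j ^ 2) ^ β)) x := by
  rw [mul_assoc]
  exact Z_eq_smul_iterate_dirac α β ℓ (x := x) hx
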